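/- With S̃ the blow-up of S at the 2g−2 points over K_R as above and n > 2, the divisor D = bl*((n+2)C₀ + (n−1)K_R f) − (n+1)ΣE_i on S̃ is ample: D² = (n²−5)(2g−2) > 0 and D has positive intersection with C₀, with every fiber class, and with every exceptional curve E_i. -/

import Mathlib

/-!
On `S̃` the classes `c = bl*C₀`, `φ = bl*f` and the exceptional curves `E_i` have the Gram matrix
`c² = φ² = 0`, `c·φ = 1`, `E_i·E_j = −δ_{ij}`, and they are orthogonal to each other otherwise.
Hence `D = a c + b φ − m ΣE_i` meets `c`, `φ` and each `E_i` in `b`, `a` and `m`, and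
`D² = 2ab − k m²` for `k` exceptional curves. With `a = n+2`, `b = (n−1)(2g−2)`, `m = n+1`,
`k = 2g−2` this is `(n²−5)(2g−2)`, and all four numbers are positive once `n ≥ 3` and `g ≥ 2`.
-/

open Finset

section

variable {R M ι : Type*} [CommRing R] [AddCommGroup M] [Module R M] [Fintype ι] [DecidableEq ι]

structure IsBlowupGram (B : LinearMap.BilinForm R M) (c φ : M) (E : ι → M) : Prop where
  c_c : B c c = 0
  c_φ : B c φ = 1
  φ_c : B φ c = 1
  φ_φ : B φ φ = 0
  c_E : ∀ i, B c (E i) = 0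
  φ_E : ∀ i, B φ (E i) = 0
  E_c : ∀ i, B (E i) c = 0
  E_φ : ∀ i, B (E i) φ = 0
  E_E : ∀ i j, B (E i) (E j) = if i = j then -1 else 0

def blowupDivisor (c φ : M) (E : ι → M) (a b m : R) : M := a • c + b • φ - m • ∑ i, E i

namespace IsBlowupGram

variable {B : LinearMap.BilinForm R M} {c φ : M} {E : ι → M}

theorem apply_c (h : IsBlowupGram B c φ E) (a b m : R) :
    B (blowupDivisor c φ E a b m) c = b := by
  simp [blowupDivisor, h.c_c, h.φ_c, h.E_c]

theorem apply_φ (h : IsBlowupGram B c φ E) (a b m : R) :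
    B (blowupDivisor c φ E a b m) φ = a := by
  simp [blowupDivisor, h.c_φ, h.φ_φ, h.E_φ]

theorem apply_E (h : IsBlowupGram B c φ E) (a b m : R) (i : ι) :
    B (blowupDivisor c φ E a b m) (E i) = m := by
  simp [blowupDivisor, h.c_E, h.φ_E, h.E_E]

theorem apply_self (h : IsBlowupGram B c φ E) (a b m : R) :
    B (blowupDivisor c φ E a b m) (blowupDivisor c φ E a b m)
      = 2 * a * b - Fintype.card ι * m ^ 2 := by
  set D := blowupDivisor c φ E a b m
  calc B D D = a * B D c + b * B D φ - m * ∑ i, B D (E i) := by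
        simp only [D, blowupDivisor, map_sub, map_add, map_smul, map_sum, smul_eq_mul]
    _ = 2 * a * b - Fintype.card ι * m ^ 2 := by
        simp only [D, h.apply_c, h.apply_φ, h.apply_E, sum_const, card_univ, nsmul_eq_mul]
        ring

end IsBlowupGram

end

theorem stmt_15_general (g n : ℕ) (hg : 2 ≤ g) (hn : 2 < n)
    (P Pt : Type*) [AddCommGroup P] [AddCommGroup Pt]
    (ipS : P → P → ℤ) (ip : Pt → Pt → ℤ)
    (hb1 : ∀ x y z : Pt, ip (x + y) z = ip x z + ip y z)
    (hb2 : ∀ x y z : Pt, ip x (y + z) = ip x y + ip x z)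
    (hs1 : ∀ (c : ℤ) (x y : Pt), ip (c • x) y = c * ip x y)
    (hs2 : ∀ (c : ℤ) (x y : Pt), ip x (c • y) = c * ip x y)
    (blPull : P →+ Pt) (E : Fin (2 * g - 2) → Pt)
    (hEE : ∀ i j, ip (E i) (E j) = if i = j then -1 else 0)
    (hmix : ∀ (x : P) i, ip (blPull x) (E i) = 0)
    (hmix' : ∀ (x : P) i, ip (E i) (blPull x) = 0)
    (hpull : ∀ x y : P, ip (blPull x) (blPull y) = ipS x y)
    (C0 f : P)
    (hC0sq : ipS C0 C0 = 0) (hC0f : ipS C0 f = 1) (hfC0 : ipS f C0 = 1)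
    (hff : ipS f f = 0)
    (D : Pt)
    (hD : D = blPull (((n : ℤ) + 2) • C0 + (((n : ℤ) - 1) * (2 * (g : ℤ) - 2)) • f)
      - ((n : ℤ) + 1) • (∑ i, E i))
    (Ample : Pt → Prop)
    (hNakai : ∀ x : Pt, 0 < ip x x → 0 < ip x (blPull C0) → 0 < ip x (blPull f) →
      (∀ i, 0 < ip x (E i)) → Ample x) :
    ip D D = ((n : ℤ) ^ 2 - 5) * (2 * (g : ℤ) - 2) ∧ 0 < ip D D ∧
    0 < ip D (blPull C0) ∧ 0 < ip D (blPull f) ∧ (∀ i, 0 < ip D (E i)) ∧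
    Ample D := by
  let B : LinearMap.BilinForm ℤ Pt := LinearMap.mk₂ ℤ ip hb1 hs1 hb2 hs2
  have hGram : IsBlowupGram B (blPull C0) (blPull f) E :=
    ⟨by simp [B, hpull, hC0sq], by simp [B, hpull, hC0f], by simp [B, hpull, hfC0],
      by simp [B, hpull, hff], hmix C0, hmix f, (hmix' C0 ·), (hmix' f ·), hEE⟩
  have hD' : D = blowupDivisor (blPull C0) (blPull f) E ((n : ℤ) + 2)
      (((n : ℤ) - 1) * (2 * (g : ℤ) - 2)) ((n : ℤ) + 1) := by
    rw [hD, blowupDivisor, map_add, map_zsmul, map_zsmul]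
  have hcard : (Fintype.card (Fin (2 * g - 2)) : ℤ) = 2 * (g : ℤ) - 2 := by
    rw [Fintype.card_fin, Nat.cast_sub (by omega)]
    push_cast
    ring
  have hn' : (3 : ℤ) ≤ n := by exact_mod_cast hn
  have hg' : (2 : ℤ) ≤ g := by exact_mod_cast hg
  have hDD : ip D D = ((n : ℤ) ^ 2 - 5) * (2 * (g : ℤ) - 2) := by
    rw [hD']
    exact (hGram.apply_self _ _ _).trans (by rw [hcard]; ring)
  have hDD_pos : 0 < ip D D := hDD ▸ mul_pos (by nlinarith) (by linarith)
  have hDC0 : 0 < ip D (blPull C0) := by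
    rw [hD']
    exact (hGram.apply_c _ _ _).trans_gt (by nlinarith)
  have hDf : 0 < ip D (blPull f) := by
    rw [hD']
    exact (hGram.apply_φ _ _ _).trans_gt (by omega)
  have hDE : ∀ i, 0 < ip D (E i) := fun i => by
    rw [hD']
    exact (hGram.apply_E _ _ _ i).trans_gt (by omega)
  exact ⟨hDD, hDD_pos, hDC0, hDf, hDE, hNakai D hDD_pos hDC0 hDf hDE⟩

/-- With `S̃` the blow-up of `S` at the `2g−2` points over `K_R` and `n > 2`,
the divisor `D = bl*((n+2)C₀ + (n−1)K_Rf) − (n+1)ΣE_i` is ample: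
`D² = (n²−5)(2g−2) > 0`, and `D` has positive intersection with `C₀`, with every fiber,
and with every exceptional curve `E_i` — whence ampleness by the Nakai–Moishezon criterion
(encoded as the hypothesis `hNakai` on the surface `S̃`, whose Picard group is generated
by `bl*C₀`, fibers and the `E_i`).  Intersection rules: `E_i·E_j = −δ_{ij}`,
`bl*(x)·E_i = 0`, `bl*(x)·bl*(y) = x·y`, with `C₀² = 0`, `C₀·f = 1`, `f² = 0` on `S`. -/
theorem stmt_15 (g n : ℕ) (hg : 2 ≤ g) (hn : 2 < n)
    (P Pt : Type*) [AddCommGroup P] [AddCommGroup Pt]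
    (ipS : P → P → ℤ) (ip : Pt → Pt → ℤ)
    (hb1 : ∀ x y z : Pt, ip (x + y) z = ip x z + ip y z)
    (hb2 : ∀ x y z : Pt, ip x (y + z) = ip x y + ip x z)
    (hs1 : ∀ (c : ℤ) (x y : Pt), ip (c • x) y = c * ip x y)
    (hs2 : ∀ (c : ℤ) (x y : Pt), ip x (c • y) = c * ip x y)
    (hbS1 : ∀ x y z : P, ipS (x + y) z = ipS x z + ipS y z)
    (hbS2 : ∀ x y z : P, ipS x (y + z) = ipS x y + ipS x z)
    (hsS1 : ∀ (c : ℤ) (x y : P), ipS (c • x) y = c * ipS x y)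
    (hsS2 : ∀ (c : ℤ) (x y : P), ipS x (c • y) = c * ipS x y)
    (blPull : P →+ Pt) (E : Fin (2 * g - 2) → Pt)
    (hEE : ∀ i j, ip (E i) (E j) = if i = j then -1 else 0)
    (hmix : ∀ (x : P) i, ip (blPull x) (E i) = 0)
    (hmix' : ∀ (x : P) i, ip (E i) (blPull x) = 0)
    (hpull : ∀ x y : P, ip (blPull x) (blPull y) = ipS x y)
    (C0 f : P)
    (hC0sq : ipS C0 C0 = 0) (hC0f : ipS C0 f = 1) (hfC0 : ipS f C0 = 1)
    (hff : ipS f f = 0)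
    (D : Pt)
    (hD : D = blPull (((n : ℤ) + 2) • C0 + (((n : ℤ) - 1) * (2 * (g : ℤ) - 2)) • f)
      - ((n : ℤ) + 1) • (∑ i, E i))
    (Ample : Pt → Prop)
    (hNakai : ∀ x : Pt, 0 < ip x x → 0 < ip x (blPull C0) → 0 < ip x (blPull f) →
      (∀ i, 0 < ip x (E i)) → Ample x) :
    ip D D = ((n : ℤ) ^ 2 - 5) * (2 * (g : ℤ) - 2) ∧ 0 < ip D D ∧
    0 < ip D (blPull C0) ∧ 0 < ip D (blPull f) ∧ (∀ i, 0 < ip D (E i)) ∧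
    Ample D :=
  stmt_15_general g n hg hn P Pt ipS ip hb1 hb2 hs1 hs2 blPull E hEE hmix hmix' hpull C0 f hC0sq
    hC0f hfC0 hff D hD Ample hNakai
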